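/- Non-existence in dimension n ≥ 5. For every n ≥ 5 there exists a smooth Weyl candidate W_{abcd} on flat ℝⁿ (for any chosen signature of the constant metric η) such that no four times continuously differentiable tensor field L_{abc} with L_{abc} = L_{[ab]c} satisfies equation (4); i.e., a Lanczos potential for Weyl candidates does not generally exist in flat space of dimension at least five. -/

import Mathlib

open scoped ContDiff

noncomputable section

/-- Partial derivative `∂ᵢ f` of a scalar field on flat `ℝⁿ` (points represented as
`Fin n → ℝ`, standard coordinates) in the `i`-th coordinate direction.  In Cartesian
coordinates on flat space this is the covariant derivative `;i`. -/
def pd {n : ℕ} (i : Fin n) (f : (Fin n → ℝ) → ℝ) : (Fin n → ℝ) → ℝ :=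
  fun x => fderiv ℝ f x (Pi.single i 1)

/-- Components `η_{ab}` of the constant diagonal metric with diagonal entries `η a = ±1`;
since the entries are `±1` these coincide with the components `η^{ab}` of the inverse
metric. -/
def gm {n : ℕ} (η : Fin n → ℝ) (a b : Fin n) : ℝ := if a = b then η a else 0

/-- Antisymmetrization over two index slots. -/
def asym2 {n : ℕ} (T : Fin n → Fin n → ℝ) (a b : Fin n) : ℝ := (T a b - T b a) / 2

/-- Antisymmetrization over three index slots. -/
def asym3 {n : ℕ} (T : Fin n → Fin n → Fin n → ℝ) (a b c : Fin n) : ℝ :=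
  (T a b c - T a c b - T b a c + T b c a + T c a b - T c b a) / 6

/-- Simultaneous antisymmetrization over a pair of upper slots and a pair of lower slots. -/
def asym22 {n : ℕ} (T : Fin n → Fin n → Fin n → Fin n → ℝ) (a b c d : Fin n) : ℝ :=
  (T a b c d - T b a c d - T a b d c + T b a d c) / 4

/-- Simultaneous antisymmetrization over a triple of upper slots and a triple of lower
slots (arguments ordered as `T upper₁ upper₂ upper₃ lower₁ lower₂ lower₃`). -/
def asym33 {n : ℕ} (T : Fin n → Fin n → Fin n → Fin n → Fin n → Fin n → ℝ)
    (a b f c d e : Fin n) : ℝ :=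
  asym3 (fun a b f => asym3 (fun c d e => T a b f c d e) c d e) a b f

/-- A Weyl candidate: a 4-tensor field with the index symmetries (3a)–(3d):
antisymmetry in the first and in the second index pair, symmetry under interchange of the
two pairs, vanishing cyclic sum `W_{a[bcd]} = 0`, and vanishing trace `W^a{}_{bad} = 0`
(the trace being taken with the metric `η`). -/
def WeylCandidate {n : ℕ} (η : Fin n → ℝ)
    (W : (Fin n → ℝ) → Fin n → Fin n → Fin n → Fin n → ℝ) : Prop :=
  (∀ x a b c d, W x a b c d = - W x b a c d) ∧
  (∀ x a b c d, W x a b c d = - W x a b d c) ∧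
  (∀ x a b c d, W x a b c d = W x c d a b) ∧
  (∀ x a b c d, asym3 (fun b c d => W x a b c d) b c d = 0) ∧
  (∀ x b d, ∑ a, η a * W x a b a d = 0)

/-- The right-hand side of the Lanczos potential equation (4), in the equivalent fully
lowered form (the free indices `a b`, raised in the paper, are lowered with the invertible
diagonal metric `η`, which only multiplies each component equation by `η a * η b ≠ 0`).
Each contracted (dummy) index pair carries a factor `η i` coming from the inverse
metric. -/
def rhs4 {n : ℕ} (η : Fin n → ℝ) (L : (Fin n → ℝ) → Fin n → Fin n → Fin n → ℝ)
    (x : Fin n → ℝ) (a b c d : Fin n) : ℝ :=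
  -- 2 L^{ab}{}_{[c;d]}
  (pd d (L · a b c) x - pd c (L · a b d) x)
  -- + 2 L_{cd}{}^{[a;b]}
  + (pd b (L · c d a) x - pd a (L · c d b) x)
  -- − (4/(n−2)) δ^{[a}_{[c} ( L^{b]i}{}_{d];i} − L^{b]i}{}_{|i|;d]} + L_{d]i}{}^{b];i} − L_{d]i}{}^{|i|;b]} )
  - (4 / ((n : ℝ) - 2)) *
      asym22 (fun a b c d =>
        gm η a c *
          ∑ i, η i *
            (pd i (L · b i d) x - pd d (L · b i i) x
              + pd i (L · d i b) x - pd b (L · d i i) x)) a b c d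
  -- + (8/((n−2)(n−1))) δ^{a}_{[c} δ^{b}_{d]} L^{ij}{}_{i;j}
  + (8 / (((n : ℝ) - 2) * ((n : ℝ) - 1))) *
      ((gm η a c * gm η b d - gm η a d * gm η b c) / 2) *
      ∑ i, ∑ j, η i * η j * pd j (L · i j i) x

/-- Equation (4): `L` is a Lanczos potential for `W` (fully lowered, equivalent form). -/
def Eq4 {n : ℕ} (η : Fin n → ℝ)
    (W : (Fin n → ℝ) → Fin n → Fin n → Fin n → Fin n → ℝ)
    (L : (Fin n → ℝ) → Fin n → Fin n → Fin n → ℝ) : Prop :=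
  ∀ x a b c d, W x a b c d = rhs4 η L x a b c d

/-- The right-hand side of equation (5) (equation (4) in the Lanczos algebraic gauge
`L_{ab}{}^b = 0`), fully lowered form:
`2 L^{ab}{}_{[c;d]} + 2 L_{cd}{}^{[a;b]} − (4/(n−2)) δ^{[a}_{[c} ( L^{b]i}{}_{d];i} + L_{d]i}{}^{b];i} )`. -/
def rhs5 {n : ℕ} (η : Fin n → ℝ) (L : (Fin n → ℝ) → Fin n → Fin n → Fin n → ℝ)
    (x : Fin n → ℝ) (a b c d : Fin n) : ℝ :=
  (pd d (L · a b c) x - pd c (L · a b d) x)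
  + (pd b (L · c d a) x - pd a (L · c d b) x)
  - (4 / ((n : ℝ) - 2)) *
      asym22 (fun a b c d =>
        gm η a c * ∑ i, η i * (pd i (L · b i d) x + pd i (L · d i b) x)) a b c d

/-- Equation (5). -/
def Eq5 {n : ℕ} (η : Fin n → ℝ)
    (W : (Fin n → ℝ) → Fin n → Fin n → Fin n → Fin n → ℝ)
    (L : (Fin n → ℝ) → Fin n → Fin n → Fin n → ℝ) : Prop :=
  ∀ x a b c d, W x a b c d = rhs5 η L x a b c d

/-- Constraint (8), fully lowered form:
`W^{[ab}{}_{[cd;e]}{}^{f]} = (1/(n−4)) δ^{[a}_{[c} W^{bf]}{}_{de];i}{}^{i}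
 + (2/(n−4)) δ^{[a}_{[c} W^{|i|b}{}_{de];i}{}^{f]} + (2/(n−4)) δ^{[a}_{[c} W^{bf]}{}_{|i|d;e]}{}^{i}
 + (4/((n−3)(n−4))) δ^{[a}_{[c} δ^{b}_{d} W^{f]i}{}_{e]j;i}{}^{j}`. -/
def Constraint8 {n : ℕ} (η : Fin n → ℝ)
    (W : (Fin n → ℝ) → Fin n → Fin n → Fin n → Fin n → ℝ) : Prop :=
  ∀ x a b f c d e,
    asym33 (fun a b f c d e => pd f (pd e (W · a b c d)) x) a b f c d e =
      (1 / ((n : ℝ) - 4)) *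
          asym33 (fun a b f c d e =>
            gm η a c * ∑ i, η i * pd i (pd i (W · b f d e)) x) a b f c d e
      + (2 / ((n : ℝ) - 4)) *
          asym33 (fun a b f c d e =>
            gm η a c * ∑ i, η i * pd f (pd i (W · i b d e)) x) a b f c d e
      + (2 / ((n : ℝ) - 4)) *
          asym33 (fun a b f c d e =>
            gm η a c * ∑ i, η i * pd i (pd e (W · b f i d)) x) a b f c d e
      + (4 / (((n : ℝ) - 3) * ((n : ℝ) - 4))) *
          asym33 (fun a b f c d e =>
            gm η a c * gm η b d *
              ∑ i, ∑ j, η i * η j * pd j (pd i (W · f i e j)) x) a b f c d e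

/-- Constraint (10), fully lowered form:
`W^{[ab}{}_{cd;i}{}^{|i|e]} + 2 W^{[ab}{}_{i[c;d]}{}^{|i|e]}
 + (4/(n−3)) δ^{[a}_{[c} W^{b|i}{}_{d]j;i}{}^{j|e]} = 0`,
antisymmetrized over the upper indices `a b e` and (where indicated) the lower indices
`c d`. -/
def Constraint10 {n : ℕ} (η : Fin n → ℝ)
    (W : (Fin n → ℝ) → Fin n → Fin n → Fin n → Fin n → ℝ) : Prop :=
  ∀ x a b e c d,
    asym3 (fun a b e =>
      (∑ i, η i * pd e (pd i (pd i (W · a b c d))) x)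
      + 2 * asym2 (fun c d =>
            ∑ i, η i * pd e (pd i (pd d (W · a b i c))) x) c d
      + (4 / ((n : ℝ) - 3)) * asym2 (fun c d =>
            gm η a c *
              ∑ i, ∑ j, η i * η j * pd e (pd j (pd i (W · b i d j))) x) c d) a b e
    = 0


/-! Substituting (4) into the third-order expression
`Alt_{abe} ∂_e (□ W_{abcd} + ∂^i ∂_d W_{abic} − ∂^i ∂_c W_{abid})` with `a, b, e ∉ {c, d}`
(constraint (10) at indices where its trace term vanishes), the terms in `L_{ab·}` cancel once
partial derivatives are commuted, and what remains has the form `∂_e ∂_b V_a − ∂_e ∂_a V_b`,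
which the antisymmetrization over `a b e` kills. So every Weyl candidate with a `C⁴` Lanczos
potential satisfies this constraint. The smooth Weyl candidate
`W = (e₀ ∧ e₁ ⊙ e₂ ∧ e₃ + e₀ ∧ e₂ ⊙ e₁ ∧ e₃) x₄³`, built from five distinct indices (hence `n ≥ 5`),
violates it at `(a, b, e, c, d) = (0, 1, 4, 2, 3)`, where the expression equals `2 η₄ ≠ 0`. -/

section Calculus

variable {n : ℕ} {f g : (Fin n → ℝ) → ℝ}

theorem ContDiff.pd {k m : WithTop ℕ∞} (hf : ContDiff ℝ k f) (hmk : m + 1 ≤ k) (i : Fin n) :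
    ContDiff ℝ m (pd i f) :=
  (hf.fderiv_right hmk).clm_apply contDiff_const

theorem pd_add (hf : Differentiable ℝ f) (hg : Differentiable ℝ g) (i : Fin n) :
    pd i (fun x => f x + g x) = fun x => pd i f x + pd i g x := by
  funext x; simp [pd, fderiv_fun_add (hf x) (hg x)]

theorem pd_sub (hf : Differentiable ℝ f) (hg : Differentiable ℝ g) (i : Fin n) :
    pd i (fun x => f x - g x) = fun x => pd i f x - pd i g x := by
  funext x; simp [pd, fderiv_fun_sub (hf x) (hg x)]

theorem pd_const_mul (c : ℝ) (hf : Differentiable ℝ f) (i : Fin n) :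
    pd i (fun x => c * f x) = fun x => c * pd i f x := by
  funext x; simp [pd, fderiv_const_mul (hf x) c]

theorem pd_comm (hf : ContDiff ℝ 2 f) (i j : Fin n) : pd i (pd j f) = pd j (pd i f) := by
  funext x
  have hd : Differentiable ℝ (fderiv ℝ f) :=
    (hf.fderiv_right (m := 1) le_rfl).differentiable one_ne_zero
  have hpd : ∀ v w, pd v (pd w f) x = fderiv ℝ (fderiv ℝ f) x (Pi.single v 1) (Pi.single w 1) :=
    fun v w => by
      change fderiv ℝ (fun y => fderiv ℝ f y (Pi.single w 1)) x (Pi.single v 1) = _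
      simp [fderiv_clm_apply (hd x) (differentiableAt_const _)]
  rw [hpd, hpd, hf.contDiffAt.isSymmSndFDerivAt (by simp)]

theorem pd_mul_coord_pow (C : ℝ) (m r : Fin n) (k : ℕ) :
    pd r (fun x => C * x m ^ (k + 1)) =
      fun x => (if m = r then C * (k + 1) else 0) * x m ^ k := by
  funext x
  rw [pd, (((hasFDerivAt_apply m x).pow (k + 1)).const_mul C).fderiv]
  by_cases h : m = r
  · subst h; simp; ring
  · simp [h]

end Calculus

section LanczosEquation

variable {n : ℕ}

/-- `S_{bd} = L_b{}^i{}_{d;i} − L_b{}^i{}_{i;d} + L_d{}^i{}_{b;i} − L_d{}^i{}_{i;b}`, the bracket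
of the trace term of (4). -/
def lanczosTrace (η : Fin n → ℝ) (L : (Fin n → ℝ) → Fin n → Fin n → Fin n → ℝ) (b d : Fin n)
    (x : Fin n → ℝ) : ℝ :=
  ∑ i, η i * (pd i (L · b i d) x - pd d (L · b i i) x + pd i (L · d i b) x - pd b (L · d i i) x)

theorem sum_mul_gm_mul (η : Fin n → ℝ) (b : Fin n) (F : Fin n → ℝ) :
    ∑ i, η i * (gm η b i * F i) = η b ^ 2 * F b := by
  simp [gm, sq, mul_assoc]

variable {η : Fin n → ℝ} {L : (Fin n → ℝ) → Fin n → Fin n → Fin n → ℝ}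

theorem contDiff_lanczosTrace {k m : WithTop ℕ∞} (hL : ∀ a b c, ContDiff ℝ k (L · a b c))
    (hmk : m + 1 ≤ k) (b d : Fin n) : ContDiff ℝ m (lanczosTrace η L b d) :=
  ContDiff.sum fun i _ => contDiff_const.mul <|
    ((((hL b i d).pd hmk i).sub ((hL b i i).pd hmk d)).add ((hL d i b).pd hmk i)).sub
      ((hL d i i).pd hmk b)

theorem rhs4_of_disjoint {a b c d : Fin n} (hac : a ≠ c) (had : a ≠ d) (hbc : b ≠ c)
    (hbd : b ≠ d) (x : Fin n → ℝ) :
    rhs4 η L x a b c d =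
      pd d (L · a b c) x - pd c (L · a b d) x + (pd b (L · c d a) x - pd a (L · c d b) x) := by
  simp only [rhs4, asym22, gm, if_neg hac, if_neg had, if_neg hbc, if_neg hbd]
  ring

theorem rhs4_of_ne {a b c : Fin n} (hac : a ≠ c) (hbc : b ≠ c) (i : Fin n) (x : Fin n → ℝ) :
    rhs4 η L x a b i c =
      pd c (L · a b i) x - pd i (L · a b c) x + (pd b (L · i c a) x - pd a (L · i c b) x)
        - 1 / ((n : ℝ) - 2) *
          (gm η a i * lanczosTrace η L b c x - gm η b i * lanczosTrace η L a c x) := by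
  simp only [rhs4, asym22, lanczosTrace, gm, if_neg hac, if_neg hbc]
  ring

end LanczosEquation

section Obstruction

variable {n : ℕ}

def obstructionSummand (η : Fin n → ℝ) (W : (Fin n → ℝ) → Fin n → Fin n → Fin n → Fin n → ℝ)
    (x : Fin n → ℝ) (c d a b e : Fin n) : ℝ :=
  ∑ i, η i * (pd e (pd i (pd i (W · a b c d))) x
    + pd e (pd i (pd d (W · a b i c))) x - pd e (pd i (pd c (W · a b i d))) x)

/-- The left side of constraint (10) at indices `a, b, e ∉ {c, d}`, where its trace term
vanishes. -/
def lanczosObstruction (η : Fin n → ℝ) (W : (Fin n → ℝ) → Fin n → Fin n → Fin n → Fin n → ℝ)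
    (x : Fin n → ℝ) (a b e c d : Fin n) : ℝ :=
  asym3 (obstructionSummand η W x c d) a b e

/-- `∂_e ∂_b V_a` for the vector `V_a = L_{cda;i}{}^i + L_{ica;d}{}^i − L_{ida;c}{}^i
+ (S_{ac;d} − S_{ad;c}) / (n − 2)`, with the derivatives in the order they arise from (4). -/
def obstructionHessian (η : Fin n → ℝ) (L : (Fin n → ℝ) → Fin n → Fin n → Fin n → ℝ)
    (x : Fin n → ℝ) (c d e b a : Fin n) : ℝ :=
  ∑ i, η i * (pd e (pd b (pd i (pd i (L · c d a)))) x + pd e (pd b (pd i (pd d (L · i c a)))) x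
      - pd e (pd b (pd i (pd c (L · i d a)))) x)
    + 1 / ((n : ℝ) - 2) *
      (pd e (pd b (pd d (lanczosTrace η L a c))) x - pd e (pd b (pd c (lanczosTrace η L a d))) x)

variable {η : Fin n → ℝ} {L : (Fin n → ℝ) → Fin n → Fin n → Fin n → ℝ}

theorem obstructionSummand_rhs4 (hη : ∀ i, η i ^ 2 = 1) (hL : ∀ a b c, ContDiff ℝ 4 (L · a b c))
    (x : Fin n → ℝ) {a b c d : Fin n} (hac : a ≠ c) (had : a ≠ d) (hbc : b ≠ c) (hbd : b ≠ d)
    (e : Fin n) :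
    obstructionSummand η (rhs4 η L) x c d a b e =
      obstructionHessian η L x c d e b a - obstructionHessian η L x c d e a b := by
  have C0 : ∀ a b c, ContDiff ℝ 2 (L · a b c) := fun a b c => (hL a b c).of_le (by norm_num)
  have C1 : ∀ p a b c, ContDiff ℝ 2 (pd p (L · a b c)) := fun p a b c =>
    (hL a b c).pd (by norm_num) p
  have C2 : ∀ p q a b c, ContDiff ℝ 2 (pd p (pd q (L · a b c))) := fun p q a b c =>
    ((hL a b c).pd (m := 3) (by norm_num) q).pd (by norm_num) p
  have C3 : ∀ p q r a b c, ContDiff ℝ 1 (pd p (pd q (pd r (L · a b c)))) := fun p q r a b c =>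
    (C2 q r a b c).pd (by norm_num) p
  have S0 : ∀ b d, ContDiff ℝ 2 (lanczosTrace η L b d) := contDiff_lanczosTrace hL (by norm_num)
  have S1 : ∀ p b d, ContDiff ℝ 2 (pd p (lanczosTrace η L b d)) := fun p b d =>
    (contDiff_lanczosTrace hL (m := 3) (by norm_num) b d).pd (by norm_num) p
  have S2 : ∀ p q b d, ContDiff ℝ 1 (pd p (pd q (lanczosTrace η L b d))) := fun p q b d =>
    (S1 q b d).pd (by norm_num) p
  have trace_as_sum : ∀ u v, pd e (pd u (pd d (lanczosTrace η L v c))) x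
      - pd e (pd u (pd c (lanczosTrace η L v d))) x =
      ∑ i, η i * (gm η u i * (pd e (pd i (pd d (lanczosTrace η L v c))) x
        - pd e (pd i (pd c (lanczosTrace η L v d))) x)) := fun u v => by
    rw [sum_mul_gm_mul, hη, one_mul]
  rw [obstructionSummand, obstructionHessian, obstructionHessian, trace_as_sum b a,
    trace_as_sum a b]
  simp only [rhs4_of_disjoint hac had hbc hbd, rhs4_of_ne hac hbc, rhs4_of_ne had hbd]
  simp (disch := fun_prop (disch := norm_num)) only [pd_add, pd_sub, pd_const_mul]
  simp only [Finset.mul_sum, ← Finset.sum_add_distrib, ← Finset.sum_sub_distrib]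
  refine Finset.sum_congr rfl fun i _ => ?_
  -- `pd_comm` is a permutation lemma, so `simp` sorts every iterated derivative canonically
  simp only [pd_comm, C0, C1, C2, S0, S1]
  ring

theorem obstructionHessian_comm (hL : ∀ a b c, ContDiff ℝ 4 (L · a b c)) (x : Fin n → ℝ)
    (c d e b a : Fin n) :
    obstructionHessian η L x c d e b a = obstructionHessian η L x c d b e a := by
  have hL2 : ∀ p q a b c, ContDiff ℝ 2 (pd p (pd q (L · a b c))) := fun p q a b c =>
    ((hL a b c).pd (m := 3) (by norm_num) q).pd (by norm_num) p
  have hS2 : ∀ p b d, ContDiff ℝ 2 (pd p (lanczosTrace η L b d)) := fun p b d =>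
    (contDiff_lanczosTrace hL (m := 3) (by norm_num) b d).pd (by norm_num) p
  simp only [obstructionHessian, pd_comm (hL2 _ _ _ _ _) e b, pd_comm (hS2 _ _ _) e b]

theorem asym3_sub_eq_zero_of_comm (G : Fin n → Fin n → Fin n → ℝ)
    (hG : ∀ u v w, G u v w = G v u w) (a b e : Fin n) :
    asym3 (fun a b e => G e b a - G e a b) a b e = 0 := by
  simp only [asym3]
  rw [hG e b a, hG e a b, hG b a e]
  ring

theorem lanczosObstruction_rhs4 (hη : ∀ i, η i ^ 2 = 1) (hL : ∀ a b c, ContDiff ℝ 4 (L · a b c))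
    (x : Fin n → ℝ) {a b e c d : Fin n} (hac : a ≠ c) (had : a ≠ d) (hbc : b ≠ c) (hbd : b ≠ d)
    (hec : e ≠ c) (hed : e ≠ d) : lanczosObstruction η (rhs4 η L) x a b e c d = 0 := by
  rw [lanczosObstruction, asym3, obstructionSummand_rhs4 hη hL x hac had hbc hbd,
    obstructionSummand_rhs4 hη hL x hac had hec hed,
    obstructionSummand_rhs4 hη hL x hbc hbd hac had,
    obstructionSummand_rhs4 hη hL x hbc hbd hec hed,
    obstructionSummand_rhs4 hη hL x hec hed hac had,
    obstructionSummand_rhs4 hη hL x hec hed hbc hbd]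
  exact asym3_sub_eq_zero_of_comm _ (obstructionHessian_comm hL x c d) a b e

theorem Eq4.lanczosObstruction_eq_zero {W : (Fin n → ℝ) → Fin n → Fin n → Fin n → Fin n → ℝ}
    (h : Eq4 η W L) (hη : ∀ i, η i ^ 2 = 1) (hL : ∀ a b c, ContDiff ℝ 4 (L · a b c))
    (x : Fin n → ℝ) {a b e c d : Fin n} (hac : a ≠ c) (had : a ≠ d) (hbc : b ≠ c) (hbd : b ≠ d)
    (hec : e ≠ c) (hed : e ≠ d) : lanczosObstruction η W x a b e c d = 0 := by
  obtain rfl : W = rhs4 η L := by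
    funext x a b c d
    exact h x a b c d
  exact lanczosObstruction_rhs4 hη hL x hac had hbc hbd hec hed

end Obstruction

section Witness

variable {n : ℕ}

def wedge (u v a b : Fin n) : ℝ :=
  (if a = u then 1 else 0) * (if b = v then 1 else 0)
    - (if a = v then 1 else 0) * (if b = u then 1 else 0)

/-- `(e_u ∧ e_v) ⊙ (e_w ∧ e_z) + (e_u ∧ e_w) ⊙ (e_v ∧ e_z)`: the second product restores the
cyclic identity, which the first alone violates. -/
def weylTensor (u v w z a b c d : Fin n) : ℝ :=
  wedge u v a b * wedge w z c d + wedge w z a b * wedge u v c d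
    + wedge u w a b * wedge v z c d + wedge v z a b * wedge u w c d

def cubicWitness (ι : Fin 5 ↪ Fin n) (x : Fin n → ℝ) (a b c d : Fin n) : ℝ :=
  weylTensor (ι 0) (ι 1) (ι 2) (ι 3) a b c d * x (ι 4) ^ 3

theorem wedge_mul_wedge_eq_zero {u v w z : Fin n} (huw : u ≠ w) (huz : u ≠ z) (hvw : v ≠ w)
    (hvz : v ≠ z) (a b d : Fin n) : wedge u v a b * wedge w z a d = 0 := by
  by_cases hu : a = u
  · subst hu; simp [wedge, huw, huz]
  by_cases hv : a = v
  · subst hv; simp [wedge, hvw, hvz]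
  · simp [wedge, hu, hv]

theorem weylTensor_diag_eq_zero {u v w z : Fin n} (huv : u ≠ v) (huw : u ≠ w) (huz : u ≠ z)
    (hvw : v ≠ w) (hvz : v ≠ z) (hwz : w ≠ z) (a b d : Fin n) :
    weylTensor u v w z a b a d = 0 := by
  rw [weylTensor, wedge_mul_wedge_eq_zero huw huz hvw hvz,
    wedge_mul_wedge_eq_zero huw.symm hvw.symm huz.symm hvz.symm,
    wedge_mul_wedge_eq_zero huv huz hvw.symm hwz,
    wedge_mul_wedge_eq_zero huv.symm hvw huz.symm hwz.symm]
  ring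

theorem contDiff_cubicWitness (ι : Fin 5 ↪ Fin n) (a b c d : Fin n) :
    ContDiff ℝ ∞ (fun x => cubicWitness ι x a b c d) := by
  unfold cubicWitness
  fun_prop

theorem weylCandidate_cubicWitness (η : Fin n → ℝ) (ι : Fin 5 ↪ Fin n) :
    WeylCandidate η (cubicWitness ι) := by
  refine ⟨fun x a b c d => ?_, fun x a b c d => ?_, fun x a b c d => ?_, fun x a b c d => ?_,
    fun x b d => Finset.sum_eq_zero fun a _ => ?_⟩
  · simp only [cubicWitness, weylTensor, wedge]; ring
  · simp only [cubicWitness, weylTensor, wedge]; ring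
  · simp only [cubicWitness, weylTensor, wedge]; ring
  · simp only [asym3, cubicWitness, weylTensor, wedge]; ring
  · rw [cubicWitness, weylTensor_diag_eq_zero (ι.injective.ne (by decide))
      (ι.injective.ne (by decide)) (ι.injective.ne (by decide)) (ι.injective.ne (by decide))
      (ι.injective.ne (by decide)) (ι.injective.ne (by decide)), zero_mul, mul_zero]

theorem lanczosObstruction_cubicWitness (η : Fin n → ℝ) (ι : Fin 5 ↪ Fin n) (x : Fin n → ℝ) :
    lanczosObstruction η (cubicWitness ι) x (ι 0) (ι 1) (ι 4) (ι 2) (ι 3) = 2 * η (ι 4) := by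
  simp only [lanczosObstruction, obstructionSummand, asym3, cubicWitness, pd_mul_coord_pow]
  simp [weylTensor, wedge]
  ring

end Witness

/-- **Non-existence in dimension `n ≥ 5`.**  For every `n ≥ 5` and every signature there
is a smooth Weyl candidate on flat `ℝⁿ` admitting no four times continuously
differentiable Lanczos potential (with `L_{abc} = L_{[ab]c}`) via equation (4). -/
theorem lanczos_potential_does_not_generally_exist_dim_ge_five
    (n : ℕ) (hn : 5 ≤ n) (η : Fin n → ℝ) (hη : ∀ i, η i = 1 ∨ η i = -1) :
    ∃ W : (Fin n → ℝ) → Fin n → Fin n → Fin n → Fin n → ℝ,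
      (∀ a b c d, ContDiff ℝ ∞ (fun x => W x a b c d)) ∧
      WeylCandidate η W ∧
      ¬ ∃ L : (Fin n → ℝ) → Fin n → Fin n → Fin n → ℝ,
          (∀ a b c, ContDiff ℝ 4 (fun x => L x a b c)) ∧
          (∀ x a b c, L x a b c = - L x b a c) ∧
          Eq4 η W L := by
  let ι := Fin.castLEEmb hn
  refine ⟨cubicWitness ι, contDiff_cubicWitness ι, weylCandidate_cubicWitness η ι, ?_⟩
  rintro ⟨L, hL, -, hEq⟩
  have hη2 : ∀ i, η i ^ 2 = 1 := fun i => by rcases hη i with h | h <;> simp [h]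
  have h : 2 * η (ι 4) = 0 := by
    rw [← lanczosObstruction_cubicWitness η ι 0]
    exact hEq.lanczosObstruction_eq_zero hη2 hL 0 (ι.injective.ne (by decide))
      (ι.injective.ne (by decide)) (ι.injective.ne (by decide)) (ι.injective.ne (by decide))
      (ι.injective.ne (by decide)) (ι.injective.ne (by decide))
  simpa [show η (ι 4) = 0 by linarith] using hη2 (ι 4)
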